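/- arXiv:2104.10841 — 6 statements merged into one kernel-verified Lean document; each statement's English description precedes it below -/
import Mathlib

section
/- If every point of a nonempty subset K of ℝ^m has a unique best approximation in K (i.e., K is a Chebyshev set in ℝ^m), then K is closed and convex; conversely every nonempty closed convex subset of ℝ^m is a Chebyshev set. -/
/-!
A set admitting nearest points is closed, and in a proper space uniqueness of nearest points
makes the nearest-point map `P` continuous (a compactness argument). Expanding
`‖P x - x‖ ≤ ‖y - x‖` shows that `f x = ⟪x, P x⟫ - ‖P x‖² / 2` is the supremum of the affine
functions `x ↦ ⟪x, y⟫ - ‖y‖² / 2` over `y ∈ K`, with `P z` a subgradient of `f` at `z`. So for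
every `y` in the convex hull of `K` the function `f - ⟪·, y⟫` is bounded below. Minimising it
after adding a small quadratic penalty `ε ‖· - x₀‖²` and letting the minimiser move in the
direction `-(P x - y)` forces `‖P x - y‖ ≤ 2ε`, so `y ∈ closure (range P) ⊆ K`.
Conversely, nearest points to a closed set exist by compactness and are unique for a convex
set because the Euclidean norm is strictly convex.
-/

open Set Filter Topology Metric RealInnerProductSpace

section Normed

variable {E : Type*} [NormedAddCommGroup E]

def IsNearestPoint (K : Set E) (b y : E) : Prop :=
  y ∈ K ∧ ∀ z ∈ K, ‖y - b‖ ≤ ‖z - b‖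

theorem isClosed_of_forall_exists_isNearestPoint {K : Set E}
    (h : ∀ b, ∃ y, IsNearestPoint K b y) : IsClosed K := by
  refine isClosed_of_closure_subset fun b hb => ?_
  obtain ⟨y, hyK, hy⟩ := h b
  suffices y = b from this ▸ hyK
  refine eq_of_forall_dist_le fun ε hε => ?_
  obtain ⟨z, hzK, hz⟩ := Metric.mem_closure_iff.1 hb ε hε
  rw [dist_eq_norm]
  linarith [hy z hzK, dist_eq_norm' b z]

theorem IsNearestPoint.norm_sub_le {K : Set E} {b y z : E} (hy : IsNearestPoint K b y)
    (hz : z ∈ K) (x : E) : ‖y - x‖ ≤ ‖z - x‖ + 2 * ‖b - x‖ :=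
  calc ‖y - x‖ ≤ ‖y - b‖ + ‖b - x‖ := norm_sub_le_norm_sub_add_norm_sub y b x
    _ ≤ ‖z - b‖ + ‖b - x‖ := by gcongr; exact hy.2 z hz
    _ ≤ ‖z - x‖ + ‖x - b‖ + ‖b - x‖ := by gcongr; exact norm_sub_le_norm_sub_add_norm_sub z x b
    _ = ‖z - x‖ + 2 * ‖b - x‖ := by rw [norm_sub_rev x b]; ring

theorem IsClosed.exists_isNearestPoint [ProperSpace E] {K : Set E} (hK : IsClosed K)
    (hne : K.Nonempty) (b : E) : ∃ y, IsNearestPoint K b y := by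
  obtain ⟨y, hyK, hy⟩ := hK.exists_infDist_eq_dist hne b
  refine ⟨y, hyK, fun z hz => ?_⟩
  rw [← dist_eq_norm', ← dist_eq_norm', ← hy]
  exact infDist_le_dist_of_mem hz

theorem IsNearestPoint.eq_of_convex [NormedSpace ℝ E] [StrictConvexSpace ℝ E] {K : Set E}
    (hK : Convex ℝ K) {b y₁ y₂ : E} (h₁ : IsNearestPoint K b y₁) (h₂ : IsNearestPoint K b y₂) :
    y₁ = y₂ := by
  by_contra hne
  have heq : ‖y₁ - b‖ = ‖y₂ - b‖ := (h₁.2 y₂ h₂.1).antisymm (h₂.2 y₁ h₁.1)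
  have hmid : (1 / 2 : ℝ) • y₁ + (1 / 2 : ℝ) • y₂ ∈ K :=
    hK h₁.1 h₂.1 (by norm_num) (by norm_num) (by norm_num)
  have hlt := (norm_midpoint_lt_iff heq).2 (fun h => hne (sub_left_injective h))
  have : (1 / 2 : ℝ) • y₁ + (1 / 2 : ℝ) • y₂ - b = (1 / 2 : ℝ) • (y₁ - b + (y₂ - b)) := by
    module
  exact hlt.not_ge (this ▸ h₁.2 _ hmid)

theorem continuous_of_unique_isNearestPoint [ProperSpace E] {K : Set E} (hK : IsClosed K)
    {P : E → E} (hP : ∀ b, IsNearestPoint K b (P b))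
    (huniq : ∀ b y, IsNearestPoint K b y → y = P b) : Continuous P := by
  refine continuous_iff_continuousAt.2 fun x => ?_
  have hnear : ∀ z ∈ K, ∀ δ > 0, ∀ᶠ b in 𝓝 x, P b ∈ closedBall x (‖z - x‖ + 2 * δ) := by
    intro z hz δ hδ
    filter_upwards [ball_mem_nhds x hδ] with b hb
    rw [mem_closedBall, dist_eq_norm]
    rw [mem_ball, dist_eq_norm] at hb
    linarith [(hP b).norm_sub_le hz x]
  have hcpt := (isCompact_closedBall x (‖P x - x‖ + 2)).inter_left hK
  refine hcpt.tendsto_nhds_of_unique_mapClusterPt ?_ fun a ha hcl =>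
    huniq x a ⟨ha.1, fun z hz => ?_⟩
  · filter_upwards [hnear (P x) (hP x).1 1 one_pos] with b hb
    exact ⟨(hP b).1, by simpa using hb⟩
  · refine le_of_forall_pos_le_add fun δ hδ => ?_
    have := isClosed_closedBall.mem_of_mapClusterPt hcl (hnear z hz (δ / 2) (by positivity))
    rw [mem_closedBall, dist_eq_norm] at this
    linarith

theorem exists_forall_add_sq_norm_sub_le [ProperSpace E] {f : E → ℝ} (hf : Continuous f)
    {μ ε : ℝ} (hε : 0 < ε) (hμ : ∀ x, μ ≤ f x) {x₀ : E} (hx₀ : f x₀ ≤ μ + ε) :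
    ∃ x, ‖x - x₀‖ ≤ 1 ∧ ∀ y, f x + ε * ‖x - x₀‖ ^ 2 ≤ f y + ε * ‖y - x₀‖ ^ 2 := by
  obtain ⟨x, hx⟩ := (show Continuous fun y => f y + ε * ‖y - x₀‖ ^ 2 by fun_prop).exists_forall_le'
    x₀ <| by
      filter_upwards [(isCompact_closedBall x₀ 1).compl_mem_cocompact] with y hy
      rw [mem_compl_iff, mem_closedBall, dist_eq_norm, not_le] at hy
      have : 1 ≤ ‖y - x₀‖ ^ 2 := by nlinarith
      simp only [sub_self, norm_zero]
      nlinarith [hμ y]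
  refine ⟨x, ?_, hx⟩
  have h := hx x₀
  simp only [sub_self, norm_zero] at h
  have : ‖x - x₀‖ ^ 2 ≤ 1 := by nlinarith [hμ x]
  nlinarith [norm_nonneg (x - x₀)]

end Normed

section Inner

variable {E : Type*} [NormedAddCommGroup E] [InnerProductSpace ℝ E]

theorem IsNearestPoint.inner_sub_half_sq_le {K : Set E} {b y z : E} (hy : IsNearestPoint K b y)
    (hz : z ∈ K) : ⟪b, z⟫ - ‖z‖ ^ 2 / 2 ≤ ⟪b, y⟫ - ‖y‖ ^ 2 / 2 := by
  have h := pow_le_pow_left₀ (norm_nonneg _) (hy.2 z hz) 2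
  rw [norm_sub_sq_real, norm_sub_sq_real] at h
  linarith [real_inner_comm b y, real_inner_comm b z]

theorem norm_le_of_forall_add_sq_norm_sub_le {f : E → ℝ} {P : E → E} (hP : Continuous P)
    (hsub : ∀ x z, f z + ⟪x - z, P z⟫ ≤ f x) {ε : ℝ} (hε : 0 ≤ ε) {x x₀ : E}
    (hmin : ∀ y, f x + ε * ‖x - x₀‖ ^ 2 ≤ f y + ε * ‖y - x₀‖ ^ 2) :
    ‖P x‖ ≤ 2 * ε * ‖x - x₀‖ := by
  set v := P x
  have hstep : ∀ t ∈ Ioi (0 : ℝ), ⟪v, P (x - t • v)⟫ ≤ ε * (t * ‖v‖ ^ 2 - 2 * ⟪x - x₀, v⟫) := by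
    intro t (ht : 0 < t)
    have h₁ := hsub x (x - t • v)
    have h₂ := hmin (x - t • v)
    have h₃ : ‖x - t • v - x₀‖ ^ 2 = ‖x - x₀‖ ^ 2 - 2 * t * ⟪x - x₀, v⟫ + t ^ 2 * ‖v‖ ^ 2 := by
      rw [show x - t • v - x₀ = (x - x₀) - t • v by abel, norm_sub_sq_real,
        real_inner_smul_right, norm_smul, Real.norm_eq_abs, mul_pow, sq_abs]
      ring
    rw [sub_sub_cancel, real_inner_smul_left] at h₁
    rw [h₃] at h₂
    refine le_of_mul_le_mul_left ?_ ht
    nlinarith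
  have hlim := ContinuousWithinAt.closure_le (by rw [closure_Ioi]; exact self_mem_Ici)
    (by fun_prop : Continuous fun t : ℝ => ⟪v, P (x - t • v)⟫).continuousWithinAt
    (by fun_prop : Continuous fun t : ℝ => ε * (t * ‖v‖ ^ 2 - 2 * ⟪x - x₀, v⟫)).continuousWithinAt
    hstep
  simp only [zero_smul, sub_zero, zero_mul] at hlim
  rw [real_inner_self_eq_norm_sq] at hlim
  have hcs : -⟪x - x₀, v⟫ ≤ ‖x - x₀‖ * ‖v‖ := (neg_le_abs _).trans (abs_real_inner_le_norm _ _)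
  have hsq : ‖v‖ ^ 2 ≤ 2 * ε * ‖x - x₀‖ * ‖v‖ := by nlinarith [mul_le_mul_of_nonneg_left hcs hε]
  nlinarith [norm_nonneg v, norm_nonneg (x - x₀), mul_nonneg hε (norm_nonneg (x - x₀))]

theorem mem_closure_range_of_bddBelow [ProperSpace E] {f : E → ℝ} {P : E → E}
    (hf : Continuous f) (hP : Continuous P) (hsub : ∀ x z, f z + ⟪x - z, P z⟫ ≤ f x) {y : E}
    (hbdd : BddBelow (range fun x => f x - ⟪x, y⟫)) : y ∈ closure (range P) := by
  set g := fun x => f x - ⟪x, y⟫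
  have hgsub : ∀ x z, g z + ⟪x - z, P z - y⟫ ≤ g x := fun x z => by
    have h := hsub x z
    rw [inner_sub_left] at h
    simp only [g, inner_sub_right, inner_sub_left]
    linarith
  refine Metric.mem_closure_iff.2 fun ε hε => ?_
  obtain ⟨x₀, hx₀⟩ : ∃ x₀, g x₀ < (⨅ x, g x) + ε / 4 :=
    exists_lt_of_ciInf_lt (lt_add_of_pos_right _ (by positivity))
  obtain ⟨x, hx, hmin⟩ := exists_forall_add_sq_norm_sub_le (by fun_prop) (by positivity)
    (ciInf_le hbdd) hx₀.le
  have hPx := norm_le_of_forall_add_sq_norm_sub_le (P := fun x => P x - y) (by fun_prop) hgsub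
    (by positivity) hmin
  refine ⟨P x, mem_range_self x, ?_⟩
  rw [dist_eq_norm']
  nlinarith

theorem convex_setOf_bddBelow_sub_inner (f : E → ℝ) :
    Convex ℝ {y : E | BddBelow (range fun x => f x - ⟪x, y⟫)} := by
  rintro a ⟨α, hα⟩ b ⟨β, hβ⟩ s t hs ht hst
  refine ⟨s * α + t * β, ?_⟩
  rintro _ ⟨x, rfl⟩
  have ha := mul_le_mul_of_nonneg_left (hα ⟨x, rfl⟩) hs
  have hb := mul_le_mul_of_nonneg_left (hβ ⟨x, rfl⟩) ht
  simp only [inner_add_right, real_inner_smul_right]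
  have : f x = s * f x + t * f x := by rw [← add_mul, hst, one_mul]
  linarith

theorem convex_of_continuous_isNearestPoint [ProperSpace E] {K : Set E} (hK : IsClosed K)
    {P : E → E} (hPc : Continuous P) (hP : ∀ b, IsNearestPoint K b (P b)) : Convex ℝ K := by
  set f : E → ℝ := fun x => ⟪x, P x⟫ - ‖P x‖ ^ 2 / 2
  have hsub : ∀ x z, f z + ⟪x - z, P z⟫ ≤ f x := fun x z => by
    simp only [f, inner_sub_left]
    linarith [(hP x).inner_sub_half_sq_le (hP z).1]
  have hdom : K ⊆ {y | BddBelow (range fun x => f x - ⟪x, y⟫)} := fun y hy =>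
    ⟨-(‖y‖ ^ 2 / 2), by
      rintro _ ⟨x, rfl⟩
      simp only [f]
      linarith [(hP x).inner_sub_half_sq_le hy]⟩
  have hhull : convexHull ℝ K ⊆ K := fun y hy =>
    hK.closure_subset_iff.2 (range_subset_iff.2 fun x => (hP x).1)
      (mem_closure_range_of_bddBelow (by fun_prop) hPc hsub
        (convexHull_min hdom (convex_setOf_bddBelow_sub_inner f) hy))
  exact convexHull_eq_self.1 (hhull.antisymm (subset_convexHull ℝ K))

end Inner

/-- A nonempty set `K ⊆ ℝ^m` is a Chebyshev set (every point has a unique best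
approximation in `K`) if and only if `K` is closed and convex. -/
theorem chebyshev_iff_closed_convex {m : ℕ}
    (K : Set (EuclideanSpace ℝ (Fin m))) (hK : K.Nonempty) :
    (∀ b : EuclideanSpace ℝ (Fin m),
        ∃! y, y ∈ K ∧ ∀ z ∈ K, ‖y - b‖ ≤ ‖z - b‖) ↔
      IsClosed K ∧ Convex ℝ K := by
  constructor
  · intro hC
    choose P hP using fun b => (hC b).exists
    have hclosed : IsClosed K := isClosed_of_forall_exists_isNearestPoint fun b => ⟨P b, hP b⟩
    have hPc : Continuous P :=
      continuous_of_unique_isNearestPoint hclosed hP fun b _ hy => (hC b).unique hy (hP b)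
    exact ⟨hclosed, convex_of_continuous_isNearestPoint hclosed hPc hP⟩
  · rintro ⟨hclosed, hconv⟩ b
    obtain ⟨y, hy⟩ := hclosed.exists_isNearestPoint hK b
    exact ⟨y, hy, fun z hz => IsNearestPoint.eq_of_convex hconv hz hy⟩
end

section
/- A matrix A = [a₁,…,a_m]ᵀ ∈ ℝ^{m×d} has the phase retrieval property on ℝ^d if and only if it has the complement property: for every subset I ⊆ {1,…,m}, either span{a_j : j ∈ I} = ℝ^d or span{a_j : j ∈ I^c} = ℝ^d. -/
/-!
If neither the rows `a_j, j ∈ I` nor the rows `a_j, j ∉ I` span, pick nonzero `u ⊥ a_I` and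
`v ⊥ a_{Iᶜ}`: then `u + v` and `u - v` have the same measurements `|⟨a_j, ·⟩|` but differ by
neither sign. Conversely, if `x` and `y` have the same measurements, let `I` be the set where
`⟨a_j, x⟩ = ⟨a_j, y⟩`; then `x - y ⊥ a_I` and `x + y ⊥ a_{Iᶜ}`, so the complement property
forces one of them to vanish.
-/

open Matrix Submodule

section

variable {K n : Type*} [Field K] [Fintype n] [DecidableEq n] {S : Set (n → K)}

theorem span_eq_top_iff_forall_dotProduct_eq_zero :
    span K S = ⊤ ↔ ∀ z, (∀ s ∈ S, s ⬝ᵥ z = 0) → z = 0 := by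
  rw [← dualAnnihilator_eq_bot_iff, eq_bot_iff, SetLike.le_def,
    (dotProductEquiv K n).symm.forall_congr_left]
  simp only [mem_dualAnnihilator, ← LinearMap.mem_ker, ← SetLike.le_def, span_le, mem_bot]
  simp [Set.subset_def, dotProduct_comm]

theorem exists_ne_zero_forall_dotProduct_eq_zero (h : span K S ≠ ⊤) :
    ∃ z ≠ 0, ∀ s ∈ S, s ⬝ᵥ z = 0 := by
  simpa [span_eq_top_iff_forall_dotProduct_eq_zero, and_comm] using h

end

def HasComplementProperty (R : Type*) {M ι : Type*} [Semiring R] [AddCommMonoid M] [Module R M]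
    (a : ι → M) : Prop :=
  ∀ I : Set ι, span R (a '' I) = ⊤ ∨ span R (a '' Iᶜ) = ⊤

section

variable {K ι n : Type*} [Field K] [LinearOrder K] [Fintype n]

def IsPhaseRetrievable (a : ι → n → K) : Prop :=
  ∀ x y : n → K, (∀ j, |a j ⬝ᵥ x| = |a j ⬝ᵥ y|) → x = y ∨ x = -y

variable [DecidableEq n] {a : ι → n → K}

theorem HasComplementProperty.isPhaseRetrievable (h : HasComplementProperty K a) :
    IsPhaseRetrievable a := by
  intro x y hxy
  let I := {j | a j ⬝ᵥ x = a j ⬝ᵥ y}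
  have hI : ∀ s ∈ a '' I, s ⬝ᵥ (x - y) = 0 := by
    rintro _ ⟨j, hj, rfl⟩
    rw [dotProduct_sub, sub_eq_zero]
    exact hj
  have hIc : ∀ s ∈ a '' Iᶜ, s ⬝ᵥ (x + y) = 0 := by
    rintro _ ⟨j, hj, rfl⟩
    rw [dotProduct_add, (abs_eq_abs.mp (hxy j)).resolve_left hj, neg_add_cancel]
  rcases h I with h | h
  · exact .inl (sub_eq_zero.mp (span_eq_top_iff_forall_dotProduct_eq_zero.mp h _ hI))
  · exact .inr (eq_neg_of_add_eq_zero_left (span_eq_top_iff_forall_dotProduct_eq_zero.mp h _ hIc))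

variable [IsStrictOrderedRing K]

theorem IsPhaseRetrievable.hasComplementProperty (h : IsPhaseRetrievable a) :
    HasComplementProperty K a := by
  intro I
  by_contra! ⟨hI, hIc⟩
  obtain ⟨u, hu, huI⟩ := exists_ne_zero_forall_dotProduct_eq_zero hI
  obtain ⟨v, hv, hvIc⟩ := exists_ne_zero_forall_dotProduct_eq_zero hIc
  have habs : ∀ j, |a j ⬝ᵥ (u + v)| = |a j ⬝ᵥ (u - v)| := by
    intro j
    by_cases hj : j ∈ I
    · simp [dotProduct_add, dotProduct_sub, huI _ (Set.mem_image_of_mem a hj)]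
    · simp [dotProduct_add, dotProduct_sub, hvIc _ (Set.mem_image_of_mem a hj)]
  rcases h _ _ habs with h | h
  · exact hv (self_eq_neg.mp (by linear_combination (norm := module) h))
  · exact hu (self_eq_neg.mp (by linear_combination (norm := module) h))

theorem isPhaseRetrievable_iff_hasComplementProperty :
    IsPhaseRetrievable a ↔ HasComplementProperty K a :=
  ⟨IsPhaseRetrievable.hasComplementProperty, HasComplementProperty.isPhaseRetrievable⟩

end

/-- A matrix `A = [a₁,…,a_m]ᵀ ∈ ℝ^{m×d}` has the phase retrieval property on `ℝ^d`
if and only if it has the complement property: for every `I ⊆ {1,…,m}`, either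
the rows indexed by `I` or the rows indexed by `Iᶜ` span `ℝ^d`. -/
theorem phase_retrieval_iff_complement_property {m d : ℕ}
    (A : Matrix (Fin m) (Fin d) ℝ) :
    (∀ x y : Fin d → ℝ,
        (∀ j, |A.mulVec x j| = |A.mulVec y j|) → x = y ∨ x = -y) ↔
      (∀ I : Set (Fin m),
        Submodule.span ℝ ((fun j => A j) '' I) = ⊤ ∨
        Submodule.span ℝ ((fun j => A j) '' Iᶜ) = ⊤) :=
  isPhaseRetrievable_iff_hasComplementProperty (a := A)
end

section
/- Suppose A ∈ ℝ^{m×d} and b ∈ ℝ₊^m. If x̂ ∈ ℝ^d is a global minimizer of ‖|Ax| − b‖² over x ∈ ℝ^d and AᵀA is invertible, then x̂ satisfies the fixed-point equation x̂ = (AᵀA)⁻¹Aᵀ(b ⊙ s(Ax̂)), where s(Ax̂) is the entrywise sign of Ax̂ (with sign 0 taken as 1) and ⊙ is the entrywise product. -/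
/-!
Put `σ = s(Ax̂)` and `c = b ⊙ σ`. Since `bᵢ ≥ 0` and `|σᵢ| = 1`, we have `(|z| - bᵢ)² ≤ (z - cᵢ)²`
for every real `z`, with equality at `z = (Ax̂)ᵢ`. Hence `x̂` also minimizes the least-squares
objective `‖Ax - c‖²`, so it solves the normal equations `AᵀA x̂ = Aᵀc`.
-/

open Matrix

variable {R : Type*} [Field R] [LinearOrder R] [IsStrictOrderedRing R]

section LeastSquares

variable {m n : Type*} [Fintype m] [Fintype n]

theorem dotProduct_eq_zero_of_forall_dotProduct_self_le {r w : m → R}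
    (h : ∀ t : R, r ⬝ᵥ r ≤ (r + t • w) ⬝ᵥ (r + t • w)) : r ⬝ᵥ w = 0 := by
  have hquad : ∀ t : R, 0 ≤ (w ⬝ᵥ w) * (t * t) + 2 * (r ⬝ᵥ w) * t + 0 := fun t => by
    have ht := h t
    simp only [add_dotProduct, dotProduct_add, smul_dotProduct, dotProduct_smul, smul_eq_mul,
      dotProduct_comm w r] at ht
    linear_combination ht
  have hdiscrim := discrim_le_zero hquad
  rw [discrim, mul_zero, sub_zero] at hdiscrim
  have : 2 * (r ⬝ᵥ w) = 0 := pow_eq_zero_iff two_ne_zero |>.mp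
    (le_antisymm hdiscrim (sq_nonneg _))
  simpa using this

def Matrix.IsLeastSquaresSolution (A : Matrix m n R) (c : m → R) (x₀ : n → R) : Prop :=
  ∀ x, (A *ᵥ x₀ - c) ⬝ᵥ (A *ᵥ x₀ - c) ≤ (A *ᵥ x - c) ⬝ᵥ (A *ᵥ x - c)

theorem Matrix.IsLeastSquaresSolution.normal_eq {A : Matrix m n R} {c : m → R} {x₀ : n → R}
    (h : A.IsLeastSquaresSolution c x₀) : (Aᵀ * A) *ᵥ x₀ = Aᵀ *ᵥ c := by
  set r := A *ᵥ x₀ - c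
  have horth : ∀ v, (Aᵀ *ᵥ r) ⬝ᵥ v = 0 := fun v => by
    rw [mulVec_transpose, ← dotProduct_mulVec]
    refine dotProduct_eq_zero_of_forall_dotProduct_self_le fun t => ?_
    have hshift : A *ᵥ (x₀ + t • v) - c = r + t • A *ᵥ v := by
      rw [mulVec_add, mulVec_smul, add_sub_right_comm]
    simpa only [hshift] using h (x₀ + t • v)
  have hr : Aᵀ *ᵥ r = 0 := dotProduct_self_eq_zero.mp (horth _)
  rwa [mulVec_sub, mulVec_mulVec, sub_eq_zero] at hr

end LeastSquares

section SignOrOne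

def signOrOne (y : R) : R := if y = 0 then 1 else y / |y|

theorem abs_signOrOne (y : R) : |signOrOne y| = 1 := by
  unfold signOrOne
  split_ifs with hy
  · exact abs_one
  · rw [abs_div, abs_abs, div_self (abs_ne_zero.mpr hy)]

theorem signOrOne_mul_self (y : R) : signOrOne y * y = |y| := by
  unfold signOrOne
  split_ifs with hy
  · simp [hy]
  · rw [div_mul_eq_mul_div, ← abs_mul_abs_self, mul_div_assoc, div_self (abs_ne_zero.mpr hy),
      mul_one]

variable {σ b : R}

theorem sq_abs_sub_le_sq_sub_mul (hσ : |σ| = 1) (hb : 0 ≤ b) (z : R) :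
    (|z| - b) ^ 2 ≤ (z - b * σ) ^ 2 := by
  have hσz : σ * z ≤ |z| := by
    simpa [abs_mul, hσ] using le_abs_self (σ * z)
  have hσsq : σ ^ 2 = 1 := by rw [← sq_abs, hσ, one_pow]
  calc (|z| - b) ^ 2 ≤ (|z| - b) ^ 2 + 2 * (b * (|z| - σ * z)) :=
        le_add_of_nonneg_right (by have := sub_nonneg.mpr hσz; positivity)
    _ = (z - b * σ) ^ 2 := by linear_combination sq_abs z - b ^ 2 * hσsq

theorem sq_abs_sub_eq_sq_sub_mul (hσ : |σ| = 1) {z : R} (hσz : σ * z = |z|) :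
    (|z| - b) ^ 2 = (z - b * σ) ^ 2 := by
  have hσsq : σ ^ 2 = 1 := by rw [← sq_abs, hσ, one_pow]
  linear_combination sq_abs z + 2 * b * hσz - b ^ 2 * hσsq

end SignOrOne

open Finset Matrix in
/-- Any global minimizer `xhat` of `‖|Ax| − b‖²` with `b ≥ 0` and `AᵀA` invertible
satisfies the fixed-point equation `xhat = (AᵀA)⁻¹Aᵀ(b ⊙ s(Axhat))`. -/
theorem fixed_point_equation {m d : ℕ}
    (A : Matrix (Fin m) (Fin d) ℝ) (b : Fin m → ℝ)
    (hb : ∀ i, 0 ≤ b i)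
    (hinv : IsUnit (Aᵀ * A))
    (xhat : Fin d → ℝ)
    (hmin : ∀ x : Fin d → ℝ,
      ∑ i, (|A.mulVec xhat i| - b i) ^ 2 ≤ ∑ i, (|A.mulVec x i| - b i) ^ 2) :
    xhat = (Aᵀ * A)⁻¹.mulVec (Aᵀ.mulVec (fun i =>
      b i * (if A.mulVec xhat i = 0 then 1 else A.mulVec xhat i / |A.mulVec xhat i|))) := by
  set y := A *ᵥ xhat
  set c : Fin m → ℝ := fun i => b i * signOrOne (y i)
  have hls : A.IsLeastSquaresSolution c xhat := fun x => by
    simp only [dotProduct, Pi.sub_apply, ← sq]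
    calc ∑ i, (y i - c i) ^ 2 = ∑ i, (|y i| - b i) ^ 2 := sum_congr rfl fun i _ =>
          (sq_abs_sub_eq_sq_sub_mul (abs_signOrOne _) (signOrOne_mul_self _)).symm
      _ ≤ ∑ i, (|(A *ᵥ x) i| - b i) ^ 2 := hmin x
      _ ≤ ∑ i, ((A *ᵥ x) i - c i) ^ 2 := sum_le_sum fun i _ =>
          sq_abs_sub_le_sq_sub_mul (abs_signOrOne _) (hb i) _
  let := hinv.invertible
  exact (inv_mulVec_eq_vec hls.normal_eq.symm).symm
end

section
/- Let A ∈ ℝ^{m×d} have the phase retrieval property. Then for every b ∈ ℝ^m, the set of solutions (up to sign) of argmin_{x ∈ ℝ^d} ‖|Ax| − b‖² is finite, with at most 2^m elements. -/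
/-!
Sort the minimizers by the sign pattern of `A x`, of which there are `2 ^ m`. On one sign cone
`x ↦ |A x|` is linear, so the midpoint of two minimizers in the same cone is again a competitor
whose moduli are the average of theirs; strict convexity of the squared residual then forces
both minimizers to have the same `|A x|`, and phase retrieval makes them equal up to sign.
-/
open Finset

theorem abs_add_of_nonneg_iff {G : Type*} [AddCommGroup G] [LinearOrder G] [IsOrderedAddMonoid G]
    {a b : G} (h : 0 ≤ a ↔ 0 ≤ b) : |a + b| = |a| + |b| := by
  rw [abs_add_eq_add_abs_iff]
  by_cases ha : 0 ≤ a
  · exact .inl ⟨ha, h.mp ha⟩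
  · exact .inr ⟨(not_le.mp ha).le, (not_le.mp (mt h.mpr ha)).le⟩

/-- Strict convexity of the squared distance to `c`. -/
theorem eq_of_sum_sq_le_midpoint {ι : Type*} [Fintype ι] {u v c : ι → ℝ}
    (hu : ∑ i, (u i - c i) ^ 2 ≤ ∑ i, ((u i + v i) / 2 - c i) ^ 2)
    (hv : ∑ i, (v i - c i) ^ 2 ≤ ∑ i, ((u i + v i) / 2 - c i) ^ 2) : u = v := by
  have parallelogram : ∑ i, (u i - v i) ^ 2 =
      2 * (∑ i, (u i - c i) ^ 2 + ∑ i, (v i - c i) ^ 2) - 4 * ∑ i, ((u i + v i) / 2 - c i) ^ 2 := by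
    simp only [mul_add, mul_sum, ← sum_add_distrib, ← sum_sub_distrib]
    exact sum_congr rfl fun i _ => by ring
  have hsq : ∀ i ∈ univ, 0 ≤ (u i - v i) ^ 2 := fun i _ => sq_nonneg _
  have hzero := (sum_eq_zero_iff_of_nonneg hsq).mp
    (le_antisymm (by linarith) (sum_nonneg hsq))
  funext i
  exact sub_eq_zero.mp (pow_eq_zero_iff two_ne_zero |>.mp (hzero i (mem_univ i)))

theorem abs_eq_of_isMin_of_sign_eq {ι E : Type*} [Fintype ι] [AddCommGroup E] [Module ℝ E]
    (L : E →ₗ[ℝ] ι → ℝ) (b : ι → ℝ) {x y : E}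
    (hx : ∀ w, ∑ i, (|L x i| - b i) ^ 2 ≤ ∑ i, (|L w i| - b i) ^ 2)
    (hy : ∀ w, ∑ i, (|L y i| - b i) ^ 2 ≤ ∑ i, (|L w i| - b i) ^ 2)
    (hsign : ∀ i, 0 ≤ L x i ↔ 0 ≤ L y i) :
    (fun i => |L x i|) = fun i => |L y i| := by
  have hmid : ∀ i, |L ((2 : ℝ)⁻¹ • (x + y)) i| = (|L x i| + |L y i|) / 2 := fun i => by
    rw [map_smul, map_add, Pi.smul_apply, Pi.add_apply, smul_eq_mul, abs_mul,
      abs_add_of_nonneg_iff (hsign i), abs_of_pos (by norm_num : (0 : ℝ) < 2⁻¹)]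
    ring
  apply eq_of_sum_sq_le_midpoint (c := b)
  · simpa only [hmid] using hx ((2 : ℝ)⁻¹ • (x + y))
  · simpa only [hmid] using hy ((2 : ℝ)⁻¹ • (x + y))

theorem exists_finset_card_le_of_fiber_eq_or_eq_neg {E α : Type*} [Neg E] [Fintype α]
    (S : Set E) (σ : E → α) (hσ : ∀ x ∈ S, ∀ y ∈ S, σ x = σ y → x = y ∨ x = -y) :
    ∃ T : Finset E, T.card ≤ Fintype.card α ∧ ∀ x ∈ S, ∃ y ∈ T, x = y ∨ x = -y := by
  classical
  choose r hrS hr using fun a : σ '' S => a.2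
  refine ⟨univ.image r, card_image_le.trans (Fintype.card_subtype_le _), fun x hx => ?_⟩
  let a : σ '' S := ⟨σ x, x, hx, rfl⟩
  exact ⟨r a, mem_image_of_mem r (mem_univ a), hσ x hx _ (hrS a) (hr a).symm⟩

open Finset in
/-- If `A ∈ ℝ^{m×d}` has the phase retrieval property, then for every `b ∈ ℝ^m`
the solution set of `argmin_x ‖|Ax| − b‖²` is finite up to sign, with at most
`2^m` elements. -/
theorem solutions_finite {m d : ℕ}
    (A : Matrix (Fin m) (Fin d) ℝ)
    (hPR : ∀ x y : Fin d → ℝ,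
      (fun i => |A.mulVec x i|) = (fun i => |A.mulVec y i|) → x = y ∨ x = -y)
    (b : Fin m → ℝ) :
    ∃ T : Finset (Fin d → ℝ), T.card ≤ 2 ^ m ∧
      ∀ x₁ : Fin d → ℝ,
        (∀ x : Fin d → ℝ,
          ∑ i, (|A.mulVec x₁ i| - b i) ^ 2 ≤ ∑ i, (|A.mulVec x i| - b i) ^ 2) →
        ∃ y ∈ T, x₁ = y ∨ x₁ = -y := by
  let signPattern : (Fin d → ℝ) → Fin m → Bool := fun x i => decide (0 ≤ A.mulVec x i)
  obtain ⟨T, hcard, hT⟩ := exists_finset_card_le_of_fiber_eq_or_eq_neg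
    {x | ∀ w, ∑ i, (|A.mulVec x i| - b i) ^ 2 ≤ ∑ i, (|A.mulVec w i| - b i) ^ 2} signPattern
    fun x hx y hy hxy => hPR x y <| abs_eq_of_isMin_of_sign_eq A.mulVecLin b hx hy
      fun i => decide_eq_decide.mp (congrFun hxy i)
  exact ⟨T, by simpa using hcard, hT⟩
end

section
/- Let A ∈ ℝ^{m×d} have the phase retrieval property. Then the set of b ∈ ℝ₊^m for which argmin_{x ∈ ℝ^d} ‖|Ax| − b‖² has more than one solution (up to sign) has Lebesgue measure zero in ℝ^m. -/
/-!
The residual `‖|Ax| − b‖` is the distance from `b` to the point `|Ax|` of the set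
`S = {|Ax| : x ∈ ℝ^d}`, so minimisers give nearest points of `S` to `b`. The distance function to
any set is 1-Lipschitz, hence differentiable almost everywhere by Rademacher's theorem, and
wherever it is differentiable the nearest point is unique: `‖c‖² − d(c, S)²` dominates the affine
function `2⟪v, c⟫ − ‖v‖²` for every `v ∈ S`, with contact at `b` when `v` is a nearest point, so
its gradient at `b` is `2v`. Phase retrieval turns `|Ax₁| = |Ax₂|` into `x₁ = ±x₂`.
-/

open Metric MeasureTheory

section NearestPoint

variable {E : Type*} [NormedAddCommGroup E] [InnerProductSpace ℝ E] {s : Set E} {b : E}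

theorem fderiv_norm_sq_sub_infDist_sq_of_dist_eq_infDist {v : E}
    (hd : DifferentiableAt ℝ (infDist · s) b) (hv : v ∈ s) (hbv : dist b v = infDist b s) :
    fderiv ℝ (fun c => ‖c‖ ^ 2 - infDist c s ^ 2) b = (2 : ℝ) • innerSL ℝ v := by
  set g : E → ℝ := fun c => ‖c‖ ^ 2 - infDist c s ^ 2
  set φ : E → ℝ := fun c => 2 * inner ℝ v c - ‖v‖ ^ 2
  have hg : HasFDerivAt g (fderiv ℝ g b) b :=
    ((differentiableAt_id.norm_sq ℝ).sub (hd.pow 2)).hasFDerivAt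
  have hφ : HasFDerivAt φ ((2 : ℝ) • innerSL ℝ v) b :=
    ((innerSL ℝ v).hasFDerivAt.const_mul 2).sub_const _
  have hgap : ∀ c, g c - φ c = dist c v ^ 2 - infDist c s ^ 2 := fun c => by
    rw [dist_eq_norm, norm_sub_sq_real, real_inner_comm]
    ring
  have hmin : IsLocalMin (fun c => g c - φ c) b := by
    refine .of_forall fun c => ?_
    simp only [hgap, hbv, sub_self, sub_nonneg]
    exact pow_le_pow_left₀ infDist_nonneg (infDist_le_dist_of_mem hv) 2
  exact sub_eq_zero.1 (hmin.hasFDerivAt_eq_zero (hg.sub hφ))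

theorem eq_of_dist_eq_infDist_of_differentiableAt {v₁ v₂ : E}
    (hd : DifferentiableAt ℝ (infDist · s) b) (h₁ : v₁ ∈ s) (h₂ : v₂ ∈ s)
    (e₁ : dist b v₁ = infDist b s) (e₂ : dist b v₂ = infDist b s) : v₁ = v₂ := by
  have h := (fderiv_norm_sq_sub_infDist_sq_of_dist_eq_infDist hd h₁ e₁).symm.trans
    (fderiv_norm_sq_sub_infDist_sq_of_dist_eq_infDist hd h₂ e₂)
  refine ext_inner_right ℝ fun c => ?_
  simpa using congrArg (· c) h

theorem measure_setOf_two_nearest_points_eq_zero [FiniteDimensional ℝ E] [MeasurableSpace E]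
    [BorelSpace E] (μ : Measure E) [μ.IsAddHaarMeasure] (s : Set E) :
    μ {b | ∃ v₁ ∈ s, ∃ v₂ ∈ s, v₁ ≠ v₂ ∧ dist b v₁ = infDist b s ∧ dist b v₂ = infDist b s}
      = 0 := by
  refine measure_mono_null ?_ (ae_iff.1 (lipschitz_infDist_pt s).ae_differentiableAt)
  rintro b ⟨v₁, h₁, v₂, h₂, hne, e₁, e₂⟩ hd
  exact hne (eq_of_dist_eq_infDist_of_differentiableAt hd h₁ h₂ e₁ e₂)

end NearestPoint

theorem infDist_range_eq_dist_of_forall_dist_le {α ι : Type*} [PseudoMetricSpace α] {f : ι → α}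
    {b : α} {i₀ : ι} (h : ∀ i, dist b (f i₀) ≤ dist b (f i)) :
    infDist b (Set.range f) = dist b (f i₀) :=
  le_antisymm (infDist_le_dist_of_mem ⟨i₀, rfl⟩)
    ((le_infDist ⟨f i₀, Set.mem_range_self i₀⟩).2 <| by rintro _ ⟨i, rfl⟩; exact h i)

theorem EuclideanSpace.dist_toLp_eq_sqrt {n : Type*} [Fintype n] (b : EuclideanSpace ℝ n)
    (y : n → ℝ) : dist b (WithLp.toLp 2 y) = √(∑ i, (y i - b i) ^ 2) := by
  simp only [EuclideanSpace.dist_eq, Real.dist_eq, sq_abs, abs_sub_comm]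

open Finset MeasureTheory in
/-- If `A ∈ ℝ^{m×d}` has the phase retrieval property, then the set of
`b ∈ ℝ₊^m` for which `argmin_x ‖|Ax| − b‖²` has more than one solution up to
sign has Lebesgue measure zero. -/
theorem nonuniqueness_set_measure_zero {m d : ℕ}
    (A : Matrix (Fin m) (Fin d) ℝ)
    (hPR : ∀ x y : Fin d → ℝ,
      (fun i => |A.mulVec x i|) = (fun i => |A.mulVec y i|) → x = y ∨ x = -y) :
    volume {b : EuclideanSpace ℝ (Fin m) | (∀ i, 0 ≤ b i) ∧
      ∃ x₁ x₂ : Fin d → ℝ,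
        (∀ x : Fin d → ℝ,
          ∑ i, (|A.mulVec x₁ i| - b i) ^ 2 ≤ ∑ i, (|A.mulVec x i| - b i) ^ 2) ∧
        (∀ x : Fin d → ℝ,
          ∑ i, (|A.mulVec x₂ i| - b i) ^ 2 ≤ ∑ i, (|A.mulVec x i| - b i) ^ 2) ∧
        x₁ ≠ x₂ ∧ x₁ ≠ -x₂} = 0 := by
  set absA : (Fin d → ℝ) → EuclideanSpace ℝ (Fin m) :=
    fun x => WithLp.toLp 2 fun i => |A.mulVec x i|
  refine measure_mono_null ?_ (measure_setOf_two_nearest_points_eq_zero volume (Set.range absA))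
  rintro b ⟨-, x₁, x₂, hmin₁, hmin₂, hne, hne'⟩
  have hnearest : ∀ x₀ : Fin d → ℝ, (∀ x : Fin d → ℝ,
      ∑ i, (|A.mulVec x₀ i| - b i) ^ 2 ≤ ∑ i, (|A.mulVec x i| - b i) ^ 2) →
      dist b (absA x₀) = infDist b (Set.range absA) := fun x₀ hmin =>
    (infDist_range_eq_dist_of_forall_dist_le fun x => by
      simpa only [absA, EuclideanSpace.dist_toLp_eq_sqrt] using Real.sqrt_le_sqrt (hmin x)).symm
  refine ⟨_, ⟨x₁, rfl⟩, _, ⟨x₂, rfl⟩, fun heq => ?_, hnearest x₁ hmin₁, hnearest x₂ hmin₂⟩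
  rcases hPR x₁ x₂ (funext fun i => congrFun (congrArg WithLp.ofLp heq) i) with h | h
  exacts [hne h, hne' h]
end

section
/- Let K ⊆ ℝ^m be a nonempty closed set, b₀ ∈ ℝ^m, and let y₁ ∈ K be a best approximation to b₀ from K. Then for every λ ∈ (0,1), the point λy₁ + (1−λ)b₀ has y₁ as its unique best approximation in K. -/
/-!
Moving the centre from `b₀` towards its nearest point `y₁` shrinks the distance to `y₁` by
exactly the length of the move and, by the triangle inequality, every other distance by at
most that much, so `y₁` stays nearest. If some `y ∈ K` were as near to the new centre `p`,
the triangle inequality `dist b₀ y ≤ dist b₀ p + dist p y` would be tight; by strict convexity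
`p` then lies on the segment from `b₀` to `y` at the same ratio as on the segment to `y₁`,
forcing `y = y₁`.
-/

open AffineMap

theorem IsMinOn.dist_of_dist_add_dist_eq {X : Type*} [PseudoMetricSpace X] {K : Set X}
    {b p y : X} (hy : IsMinOn (dist · b) K y) (hp : dist b p + dist p y = dist b y) :
    IsMinOn (dist · p) K y :=
  isMinOn_iff.2 fun z hz => by
    have hyz : dist y b ≤ dist z b := isMinOn_iff.1 hy z hz
    linarith [dist_triangle z p b, dist_comm y b, dist_comm b p, dist_comm p y]

theorem lineMap_right_injective {k V P : Type*} [Field k] [AddCommGroup V] [Module k V]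
    [AddTorsor V P] (b : P) {t : k} (ht : t ≠ 0) :
    Function.Injective (fun y : P => lineMap b y t) := fun y y' h => by
  simpa [lineMap_apply, smul_right_injective V ht |>.eq_iff] using h

theorem IsMinOn.eq_of_isMinOn_dist_lineMap {V P : Type*} [NormedAddCommGroup V]
    [NormedSpace ℝ V] [StrictConvexSpace ℝ V] [MetricSpace P] [NormedAddTorsor V P]
    {K : Set P} {b y y' : P} {t : ℝ} (hy : IsMinOn (dist · b) K y) (hyK : y ∈ K)
    (ht₀ : 0 < t) (ht₁ : t ≤ 1) (hy'K : y' ∈ K) (hy' : IsMinOn (dist · (lineMap b y t)) K y') :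
    y' = y := by
  set p := lineMap b y t
  have hbp : dist b p = t * dist b y := by
    rw [dist_left_lineMap, Real.norm_of_nonneg ht₀.le]
  have hpy : dist p y = (1 - t) * dist b y := by
    rw [dist_lineMap_right, Real.norm_of_nonneg (sub_nonneg.2 ht₁)]
  have hy'p : dist y' p ≤ dist y p := isMinOn_iff.1 hy' y hyK
  have hby' : dist b y ≤ dist b y' := by
    simpa only [dist_comm b] using isMinOn_iff.1 hy y' hy'K
  have htri := dist_triangle b p y'
  have hby'_eq : dist b y' = dist b y := by
    linarith [dist_comm p y, dist_comm p y']
  have hp : p = lineMap b y' t := by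
    refine eq_lineMap_of_dist_eq_mul_of_dist_eq_mul (by rw [hby'_eq, hbp]) ?_
    rw [hby'_eq]
    linarith [dist_comm p y, dist_comm p y']
  exact lineMap_right_injective b ht₀.ne' hp.symm

theorem best_approx_along_segment_unique_general {m : ℕ}
    (K : Set (EuclideanSpace ℝ (Fin m)))
    (b₀ : EuclideanSpace ℝ (Fin m)) (y₁ : EuclideanSpace ℝ (Fin m))
    (hy₁ : y₁ ∈ K ∧ ∀ z ∈ K, ‖y₁ - b₀‖ ≤ ‖z - b₀‖)
    (lam : ℝ) (hlam : lam ∈ Set.Ioo (0 : ℝ) 1) :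
    (∀ z ∈ K, ‖y₁ - (lam • y₁ + (1 - lam) • b₀)‖ ≤
        ‖z - (lam • y₁ + (1 - lam) • b₀)‖) ∧
    ∀ y, (y ∈ K ∧ ∀ z ∈ K, ‖y - (lam • y₁ + (1 - lam) • b₀)‖ ≤
        ‖z - (lam • y₁ + (1 - lam) • b₀)‖) → y = y₁ := by
  obtain ⟨hy₁K, hy₁min⟩ := hy₁
  have hp : lam • y₁ + (1 - lam) • b₀ = lineMap b₀ y₁ lam := by
    rw [lineMap_apply_module, add_comm]
  have hmin : IsMinOn (dist · b₀) K y₁ :=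
    isMinOn_iff.2 fun z hz => by simpa only [dist_eq_norm] using hy₁min z hz
  have hwbtw : Wbtw ℝ b₀ (lineMap b₀ y₁ lam) y₁ :=
    wbtw_lineMap_iff.2 (Or.inr ⟨hlam.1.le, hlam.2.le⟩)
  simp only [hp, ← dist_eq_norm]
  exact ⟨isMinOn_iff.1 (hmin.dist_of_dist_add_dist_eq hwbtw.dist_add_dist),
    fun y ⟨hyK, hy⟩ =>
      hmin.eq_of_isMinOn_dist_lineMap hy₁K hlam.1 hlam.2.le hyK (isMinOn_iff.2 hy)⟩

/-- If `y₁` is a best approximation to `b₀` from a nonempty closed set `K`, then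
for every `λ ∈ (0,1)` the point `λ y₁ + (1−λ) b₀` has `y₁` as its unique best
approximation in `K`. -/
theorem best_approx_along_segment_unique {m : ℕ}
    (K : Set (EuclideanSpace ℝ (Fin m))) (hK : K.Nonempty) (hKc : IsClosed K)
    (b₀ : EuclideanSpace ℝ (Fin m)) (y₁ : EuclideanSpace ℝ (Fin m))
    (hy₁ : y₁ ∈ K ∧ ∀ z ∈ K, ‖y₁ - b₀‖ ≤ ‖z - b₀‖)
    (lam : ℝ) (hlam : lam ∈ Set.Ioo (0 : ℝ) 1) :
    (∀ z ∈ K, ‖y₁ - (lam • y₁ + (1 - lam) • b₀)‖ ≤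
        ‖z - (lam • y₁ + (1 - lam) • b₀)‖) ∧
    ∀ y, (y ∈ K ∧ ∀ z ∈ K, ‖y - (lam • y₁ + (1 - lam) • b₀)‖ ≤
        ‖z - (lam • y₁ + (1 - lam) • b₀)‖) → y = y₁ :=
  best_approx_along_segment_unique_general K b₀ y₁ hy₁ lam hlam
end
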